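/- arXiv:2208.04830 — 5 statements merged into one kernel-verified Lean document; each statement's English description precedes it below -/
import Mathlib

section
/- Let q be an odd prime power, d ≥ 2, and let E ⊆ 𝔽_q^d. If |E| > q^{(d+1)/2}, then every nonzero element of 𝔽_q lies in the dot product set ∏(E); that is, 𝔽_q \ {0} ⊆ ∏(E). -/
open Finset

/-- Dot product `x·y = x₁y₁ + ⋯ + xₙyₙ` on `𝔽_q^n`. -/
def dotP {F : Type*} [CommRing F] {n : ℕ} (x y : Fin n → F) : F := ∑ i, x i * y i

/-- The "norm" `‖x‖ = x₁² + ⋯ + xₙ²` on `𝔽_q^n`. -/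
def nrm {F : Type*} [CommRing F] {n : ℕ} (x : Fin n → F) : F := ∑ i, x i * x i

/-- The sphere `S_r = {x ∈ 𝔽_q^n : ‖x‖ = r}`. -/
def sph (F : Type*) [CommRing F] [Fintype F] [DecidableEq F] (n : ℕ) (r : F) :
    Finset (Fin n → F) := Finset.univ.filter fun x => nrm x = r

/-- The dot product set `∏(E) = {x·y : x, y ∈ E}`. -/
def prodSet {F : Type*} [CommRing F] [DecidableEq F] {n : ℕ} (E : Finset (Fin n → F)) :
    Finset F := (E ×ˢ E).image fun p => dotP p.1 p.2

/-- Fourier transform of the indicator function of `X`: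
`X̂(m) = q^{-n} ∑_{x ∈ X} χ(-x·m)`. -/
noncomputable def fourierCoef {F : Type*} [CommRing F] [Fintype F] {n : ℕ}
    (χ : AddChar F ℂ) (X : Finset (Fin n → F)) (m : Fin n → F) : ℂ :=
  ((Fintype.card F : ℂ) ^ n)⁻¹ * ∑ x ∈ X, χ (-(dotP x m))

/-!
Let `N(x) = #{y ∈ E | x·y = t}`. Writing `q·[x·y = t] - 1` as a sum of additive characters
over `s ∈ 𝔽_q^×`, orthogonality gives, for `t ≠ 0`, the exact second moment
`∑ₓ (q N(x) - |E|)² = q^d ∑_{y ∈ E} (q - #{μ ∈ 𝔽_q^× | μ y ∈ E}) ≤ q^(d+1) |E|`.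
If `t ∉ ∏(E)` then `N` vanishes on `E`, so the left side is at least `|E|³`, forcing
`|E|² ≤ q^(d+1)`.
-/

lemma dotP_eq_dotProduct {F : Type*} [CommRing F] {n : ℕ} (x y : Fin n → F) :
    dotP x y = x ⬝ᵥ y :=
  rfl

lemma neg_mul_smul_add_smul_eq_zero_iff {R M : Type*} [Ring R] [AddCommGroup M] [Module R M]
    (u' μ : Rˣ) (y y' : M) : (-u' * μ) • y + u' • y' = 0 ↔ μ • y = y' := by
  rw [mul_smul, Units.neg_smul, neg_add_eq_zero, smul_left_cancel_iff]

namespace AddChar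

lemma map_sum_eq_prod {A M ι : Type*} [AddCommMonoid A] [CommMonoid M] (ψ : AddChar A M)
    (s : Finset ι) (f : ι → A) : ψ (∑ i ∈ s, f i) = ∏ i ∈ s, ψ (f i) := by
  induction s using Finset.cons_induction with
  | empty => simp
  | cons a s ha ih => rw [sum_cons, map_add_eq_mul, ih, prod_cons]

variable {F : Type*} [Field F] [Fintype F] [DecidableEq F] {ψ : AddChar F ℂ}

lemma sum_units_mul (hψ : ψ.IsPrimitive) (b : F) :
    ∑ u : Fˣ, ψ (u * b) = (if b = 0 then (Fintype.card F : ℂ) else 0) - 1 := by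
  have h := sum_mulShift b hψ
  rw [Fintype.sum_eq_add_sum_subtype_ne _ 0, zero_mul, map_zero_eq_one,
    ← unitsEquivNeZero.sum_comp] at h
  simp only [unitsEquivNeZero_apply_coe] at h
  split_ifs at h ⊢ <;> push_cast at h <;> linear_combination h

lemma sum_dotProduct (hψ : ψ.IsPrimitive) {d : ℕ} (v : Fin d → F) :
    ∑ x : Fin d → F, ψ (x ⬝ᵥ v) = if v = 0 then (Fintype.card F : ℂ) ^ d else 0 := by
  simp_rw [dotProduct, map_sum_eq_prod]
  rw [← Fintype.prod_sum fun i a => ψ (a * v i)]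
  simp only [sum_mulShift _ hψ, Nat.cast_ite, Nat.cast_zero, Fintype.prod_ite_zero, funext_iff,
    Pi.zero_apply, prod_const, card_univ, Fintype.card_fin]

lemma sum_sq_sum_mul_dotProduct (hψ : ψ.IsPrimitive) {d : ℕ} {ι : Type*} (s : Finset ι)
    (c : ι → ℂ) (w : ι → Fin d → F) :
    ∑ x : Fin d → F, (∑ i ∈ s, c i * ψ (x ⬝ᵥ w i)) ^ 2 =
      (Fintype.card F : ℂ) ^ d * ∑ i ∈ s, ∑ j ∈ s, if w i + w j = 0 then c i * c j else 0 := by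
  simp_rw [sq, sum_mul_sum, mul_sum]
  rw [sum_comm]
  refine sum_congr rfl fun i _ => ?_
  rw [sum_comm]
  refine sum_congr rfl fun j _ => ?_
  have h : ∀ x : Fin d → F, c i * ψ (x ⬝ᵥ w i) * (c j * ψ (x ⬝ᵥ w j)) =
      c i * c j * ψ (x ⬝ᵥ (w i + w j)) := by
    intro x
    rw [dotProduct_add, map_add_eq_mul]
    ring
  simp_rw [h, ← mul_sum, sum_dotProduct hψ]
  split_ifs <;> ring

end AddChar

def dotCount {F : Type*} [CommRing F] [DecidableEq F] {d : ℕ} (E : Finset (Fin d → F)) (t : F)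
    (x : Fin d → F) : ℕ :=
  #{y ∈ E | dotP x y = t}

lemma dotCount_eq_zero_of_notMem_prodSet {F : Type*} [CommRing F] [DecidableEq F] {d : ℕ}
    {E : Finset (Fin d → F)} {t : F} (ht : t ∉ prodSet E) {x : Fin d → F} (hx : x ∈ E) :
    dotCount E t x = 0 := by
  rw [dotCount, card_eq_zero, filter_eq_empty_iff]
  exact fun y hy hxy => ht (mem_image.mpr ⟨(x, y), mem_product.mpr ⟨hx, hy⟩, hxy⟩)

section SecondMoment

variable {F : Type*} [Field F] [Fintype F] [DecidableEq F] {d : ℕ} {ψ : AddChar F ℂ}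

lemma card_mul_dotCount_sub_card (hψ : ψ.IsPrimitive) (E : Finset (Fin d → F)) (t : F)
    (x : Fin d → F) :
    (Fintype.card F : ℂ) * dotCount E t x - #E =
      ∑ i ∈ E ×ˢ (univ : Finset Fˣ), ψ (-(i.2 * t)) * ψ (x ⬝ᵥ (i.2 • i.1)) := by
  have hy : ∀ y, ∑ u : Fˣ, ψ (-(u * t)) * ψ (x ⬝ᵥ (u • y)) =
      (if dotP x y = t then (Fintype.card F : ℂ) else 0) - 1 := by
    intro y
    have h : ∀ u : Fˣ, -(u * t) + u * x ⬝ᵥ y = u * (dotP x y - t) := fun u => by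
      rw [dotP_eq_dotProduct]
      ring
    simp_rw [← AddChar.map_add_eq_mul, dotProduct_smul, Units.smul_def, smul_eq_mul, h,
      AddChar.sum_units_mul hψ, sub_eq_zero]
  rw [sum_product]
  simp_rw [hy, sum_sub_distrib, ← sum_filter, sum_const, dotCount, nsmul_eq_mul, mul_one, mul_comm]

lemma sum_sum_ite_smul_add_smul_eq_zero (hψ : ψ.IsPrimitive) {t : F} (ht : t ≠ 0)
    (E : Finset (Fin d → F)) :
    ∑ i ∈ E ×ˢ (univ : Finset Fˣ), ∑ j ∈ E ×ˢ (univ : Finset Fˣ),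
      (if i.2 • i.1 + j.2 • j.1 = 0 then ψ (-(i.2 * t)) * ψ (-(j.2 * t)) else 0) =
      ∑ y ∈ E, ((Fintype.card F : ℂ) - #{μ : Fˣ | μ • y ∈ E}) := by
  rw [sum_product]
  refine sum_congr rfl fun y hy => ?_
  have hval : ∀ u' μ : Fˣ, ψ (-(↑(-u' * μ) * t)) * ψ (-(u' * t)) = ψ (u' * ((μ - 1) * t)) := by
    intro u' μ
    rw [← AddChar.map_add_eq_mul]
    push_cast
    ring_nf
  have hμ : ∀ μ : Fˣ, (μ - 1 : F) * t = 0 ↔ μ = 1 := by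
    intro μ
    rw [mul_eq_zero, or_iff_left ht, sub_eq_zero, Units.val_eq_one]
  -- substituting `u = -u' μ` turns `u • y + u' • y' = 0` into `y' = μ • y`
  have hsubst : ∀ u' : Fˣ, ∑ u : Fˣ, ∑ y' ∈ E,
      (if u • y + u' • y' = 0 then ψ (-(u * t)) * ψ (-(u' * t)) else 0) =
      ∑ μ ∈ {μ : Fˣ | μ • y ∈ E}, ψ (u' * ((μ - 1) * t)) := by
    intro u'
    rw [← Equiv.sum_comp (Equiv.mulLeft (-u'))]
    simp_rw [Equiv.coe_mulLeft, neg_mul_smul_add_smul_eq_zero_iff, hval, sum_ite_eq, ← sum_filter]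
  have h1 : (1 : Fˣ) ∈ ({μ : Fˣ | μ • y ∈ E} : Finset Fˣ) := by simpa using hy
  simp_rw [sum_product (s := E), sum_comm (s := E)]
  rw [sum_comm]
  simp_rw [hsubst]
  rw [sum_comm]
  simp_rw [AddChar.sum_units_mul hψ, hμ, sum_sub_distrib, sum_ite_eq', if_pos h1, sum_const,
    nsmul_eq_mul, mul_one]

theorem sum_sq_card_mul_dotCount_sub_card {t : F} (ht : t ≠ 0) (E : Finset (Fin d → F)) :
    ∑ x, ((Fintype.card F : ℤ) * dotCount E t x - #E) ^ 2 =
      Fintype.card F ^ d * ∑ y ∈ E, ((Fintype.card F : ℤ) - #{μ : Fˣ | μ • y ∈ E}) := by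
  obtain ⟨ψ, hψ1⟩ := AddChar.exists_apply_ne_zero.mpr (one_ne_zero : (1 : F) ≠ 0)
  have hψ : ψ.IsPrimitive := AddChar.IsPrimitive.of_ne_one (AddChar.ne_one_iff.mpr ⟨1, hψ1⟩)
  apply Int.cast_injective (α := ℂ)
  push_cast
  simp_rw [card_mul_dotCount_sub_card hψ, AddChar.sum_sq_sum_mul_dotProduct hψ,
    sum_sum_ite_smul_add_smul_eq_zero hψ ht]

theorem sum_sq_card_mul_dotCount_sub_card_le {t : F} (ht : t ≠ 0) (E : Finset (Fin d → F)) :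
    ∑ x, ((Fintype.card F : ℤ) * dotCount E t x - #E) ^ 2 ≤ Fintype.card F ^ (d + 1) * #E := by
  rw [sum_sq_card_mul_dotCount_sub_card ht, pow_succ, mul_assoc]
  gcongr
  calc ∑ y ∈ E, ((Fintype.card F : ℤ) - #{μ : Fˣ | μ • y ∈ E})
      ≤ ∑ _y ∈ E, (Fintype.card F : ℤ) := sum_le_sum fun _ _ => sub_le_self _ (Nat.cast_nonneg _)
    _ = Fintype.card F * #E := by rw [sum_const, nsmul_eq_mul, mul_comm]

end SecondMoment

lemma Real.rpow_lt_sq_of_rpow_div_two_lt {a b r : ℝ} (ha : 0 ≤ a) (h : a ^ (r / 2) < b) :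
    a ^ r < b ^ 2 :=
  calc a ^ r = (a ^ (r / 2)) ^ 2 := by
        rw [← Real.rpow_natCast, ← Real.rpow_mul ha]
        norm_num
    _ < b ^ 2 := pow_lt_pow_left₀ h (Real.rpow_nonneg ha _) two_ne_zero

theorem stmt0_general (F : Type*) [Field F] [Fintype F] [DecidableEq F]
    (d : ℕ) (E : Finset (Fin d → F))
    (hE : (Fintype.card F : ℝ) ^ (((d : ℝ) + 1) / 2) < (E.card : ℝ)) :
    ∀ t : F, t ≠ 0 → t ∈ prodSet E := by
  intro t ht
  by_contra hmem
  have hcube : (#E : ℤ) ^ 3 ≤ Fintype.card F ^ (d + 1) * #E :=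
    calc (#E : ℤ) ^ 3 = ∑ x ∈ E, ((Fintype.card F : ℤ) * dotCount E t x - #E) ^ 2 := by
          rw [sum_congr rfl fun x hx => by rw [dotCount_eq_zero_of_notMem_prodSet hmem hx]]
          simp only [Nat.cast_zero, mul_zero, zero_sub, neg_sq, sum_const, nsmul_eq_mul]
          ring
      _ ≤ ∑ x, ((Fintype.card F : ℤ) * dotCount E t x - #E) ^ 2 :=
          sum_le_univ_sum_of_nonneg fun _ => sq_nonneg _
      _ ≤ Fintype.card F ^ (d + 1) * #E := sum_sq_card_mul_dotCount_sub_card_le ht E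
  have hsq : (Fintype.card F : ℝ) ^ (d + 1) < (#E : ℝ) ^ 2 := by
    have := Real.rpow_lt_sq_of_rpow_div_two_lt (Nat.cast_nonneg _) hE
    rwa [← Nat.cast_add_one, Real.rpow_natCast] at this
  have hpos : (0 : ℝ) < #E := (Real.rpow_nonneg (Nat.cast_nonneg _) _).trans_lt hE
  have hcube' : (#E : ℝ) ^ 3 ≤ Fintype.card F ^ (d + 1) * #E := by exact_mod_cast hcube
  nlinarith

/-- if `q` is an odd prime power, `d ≥ 2`, `E ⊆ 𝔽_q^d` and
`|E| > q^{(d+1)/2}`, then `𝔽_q \ {0} ⊆ ∏(E)`. -/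
theorem stmt0 (F : Type*) [Field F] [Fintype F] [DecidableEq F]
    (hodd : Odd (Fintype.card F)) (d : ℕ) (hd : 2 ≤ d)
    (E : Finset (Fin d → F))
    (hE : (Fintype.card F : ℝ) ^ (((d : ℝ) + 1) / 2) < (E.card : ℝ)) :
    ∀ t : F, t ≠ 0 → t ∈ prodSet E :=
  stmt0_general F d E hE
end

section
/- Let n = 4k + 2 for some positive integer k and let q ≡ 3 (mod 4) be a prime power. Let S₀ = {y ∈ 𝔽_q^n : ||y|| = 0}. Then for every m ∈ 𝔽_q^n, q^{−n} Σ_{y ∈ S₀} χ(m·y) = q^{−1} δ₀(m) − q^{−(n+2)/2} Σ_{r ∈ 𝔽_q \ {0}} χ(r ||m||), where δ₀(m) = 1 if m = (0, …, 0) and δ₀(m) = 0 otherwise. -/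
/-! Detect the sphere by orthogonality: `q · Σ_{y ∈ S₀} χ(m·y) = Σ_s Σ_y χ(s‖y‖ + m·y)`.
The term `s = 0` is `qⁿ δ₀(m)`. For `s ≠ 0` the sum over `y` factors over the coordinates,
and completing the square turns the `i`-th factor into `χ(-mᵢ²/(4s)) η(s) G`, where `η` is
the quadratic character and `G` its Gauss sum. For even `n`, `η(s)ⁿ = 1` and
`Gⁿ = (G²)^(n/2) = (η(-1) q)^(n/2)`, which is `-q^(n/2)` when `q ≡ 3 (mod 4)` and `n/2` is
odd. Finally `r = -1/(4s)` runs over `𝔽_q^×` as `s` does. -/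

open Finset

open AddChar

section

variable {F R : Type*} [Field F] [Fintype F] [CommRing R]

lemma AddChar.map_finset_sum {ι A M : Type*} [AddCommMonoid A] [CommMonoid M]
    (ψ : AddChar A M) (s : Finset ι) (f : ι → A) :
    ψ (∑ i ∈ s, f i) = ∏ i ∈ s, ψ (f i) := by
  induction s using Finset.cons_induction with
  | empty => simp
  | cons a s ha ih => rw [Finset.sum_cons, Finset.prod_cons, map_add_eq_mul, ih]

lemma sum_pi_addChar_sum {n : ℕ} (ψ : AddChar F R) (f : Fin n → F → F) :
    ∑ y : Fin n → F, ψ (∑ i, f i (y i)) = ∏ i, ∑ t, ψ (f i t) := by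
  simp_rw [ψ.map_finset_sum]
  exact (Fintype.prod_sum fun i t => ψ (f i t)).symm

variable [DecidableEq F]

lemma sum_sdiff_zero_comp_mul_inv {M : Type*} [AddCommMonoid M] (f : F → M) {c : F}
    (hc : c ≠ 0) :
    ∑ s ∈ univ \ {0}, f (c * s⁻¹) = ∑ r ∈ univ \ {0}, f r := by
  have hinv (s : F) : c * (c * s⁻¹)⁻¹ = s := by
    rw [mul_inv, inv_inv, ← mul_assoc, mul_inv_cancel₀ hc, one_mul]
  exact Finset.sum_nbij' (c * ·⁻¹) (c * ·⁻¹) (by simp [hc]) (by simp [hc])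
    (fun s _ => hinv s) (fun s _ => hinv s) fun _ _ => rfl

lemma sum_addChar_dotP [IsDomain R] {ψ : AddChar F R} (hψ : ψ.IsPrimitive) {n : ℕ}
    (m : Fin n → F) :
    ∑ y : Fin n → F, ψ (dotP m y) = if m = 0 then (Fintype.card F : R) ^ n else 0 := by
  simp_rw [dotP, sum_pi_addChar_sum ψ fun i t => m i * t]
  simp_rw [mul_comm (m _), sum_mulShift _ hψ]
  simp only [Nat.cast_ite, Nat.cast_zero, Fintype.prod_ite_zero, Finset.prod_const,
    Finset.card_univ, Fintype.card_fin, ← funext_iff]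
  rfl

variable (F R) in
noncomputable def quadraticCharTo : MulChar F R :=
  (quadraticChar F).ringHomComp (Int.castRingHom R)

lemma quadraticCharTo_isQuadratic : (quadraticCharTo F R).IsQuadratic :=
  (quadraticChar_isQuadratic F).comp _

lemma quadraticCharTo_ne_one [CharZero R] (hF : ringChar F ≠ 2) : quadraticCharTo F R ≠ 1 :=
  (MulChar.ringHomComp_ne_one_iff (RingHom.injective_int _)).mpr (quadraticChar_ne_one hF)

lemma quadraticCharTo_sq {s : F} (hs : s ≠ 0) : quadraticCharTo F R s ^ 2 = 1 := by
  rw [quadraticCharTo, MulChar.ringHomComp_apply, ← map_pow, quadraticChar_sq_one hs, map_one]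

variable [IsDomain R]

lemma sum_addChar_mul_sq (hF : ringChar F ≠ 2) {ψ : AddChar F R} (hψ : ψ.IsPrimitive) {s : F}
    (hs : s ≠ 0) :
    ∑ t, ψ (s * t ^ 2) = quadraticCharTo F R s * gaussSum (quadraticCharTo F R) ψ := by
  have hroots (u : F) : (#{t | t ^ 2 = u} : R) = quadraticCharTo F R u + 1 := by
    have := congrArg (Int.cast : ℤ → R) (quadraticChar_card_sqrts hF u)
    simpa [quadraticCharTo] using this
  calc ∑ t, ψ (s * t ^ 2)
      = ∑ u, (quadraticCharTo F R u + 1) * ψ (s * u) := by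
        rw [← Finset.sum_fiberwise' univ (· ^ 2) fun u => ψ (s * u)]
        simp_rw [Finset.sum_const, nsmul_eq_mul, hroots]
    _ = gaussSum (quadraticCharTo F R) (ψ.mulShift (Units.mk0 s hs)) := by
        have hvanish : ∑ u, ψ (s * u) = 0 := by simpa [mul_comm s, hs] using sum_mulShift s hψ
        simp_rw [add_mul, one_mul, Finset.sum_add_distrib, hvanish, add_zero]
        rfl
    _ = quadraticCharTo F R s * gaussSum (quadraticCharTo F R) ψ := by
        rw [gaussSum_mulShift_eq, quadraticCharTo_isQuadratic.inv, Units.val_mk0]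

lemma sum_addChar_mul_sq_add_mul (hF : ringChar F ≠ 2) {ψ : AddChar F R} (hψ : ψ.IsPrimitive)
    {s : F} (hs : s ≠ 0) (c : F) :
    ∑ t, ψ (s * t ^ 2 + c * t) =
      ψ (-(4 * s)⁻¹ * c ^ 2) * (quadraticCharTo F R s * gaussSum (quadraticCharTo F R) ψ) := by
  have h2 : (2 : F) ≠ 0 := Ring.two_ne_zero hF
  have h4 : (4 : F) ≠ 0 := by simpa [show (4 : F) = 2 ^ 2 by norm_num] using h2
  have hsquare (u : F) : s * (u - c * (2 * s)⁻¹) ^ 2 + c * (u - c * (2 * s)⁻¹) =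
      -(4 * s)⁻¹ * c ^ 2 + s * u ^ 2 := by
    field_simp
    ring
  rw [← sum_addChar_mul_sq hF hψ hs, Finset.mul_sum,
    ← (Equiv.subRight (c * (2 * s)⁻¹)).sum_comp]
  simp_rw [Equiv.subRight_apply, hsquare, map_add_eq_mul]

lemma sum_addChar_mul_nrm_add_dotP (hF : ringChar F ≠ 2) {ψ : AddChar F R}
    (hψ : ψ.IsPrimitive) {s : F} (hs : s ≠ 0) {n : ℕ} (m : Fin n → F) :
    ∑ y : Fin n → F, ψ (s * nrm y + dotP m y) =
      ψ (-(4 * s)⁻¹ * nrm m) *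
        (quadraticCharTo F R s * gaussSum (quadraticCharTo F R) ψ) ^ n := by
  have hsplit (y : Fin n → F) : s * nrm y + dotP m y = ∑ i, (s * y i ^ 2 + m i * y i) := by
    simp only [nrm, dotP, Finset.mul_sum, ← Finset.sum_add_distrib, sq]
  simp_rw [hsplit, sum_pi_addChar_sum ψ fun i t => s * t ^ 2 + m i * t,
    sum_addChar_mul_sq_add_mul hF hψ hs, Finset.prod_mul_distrib, ← ψ.map_finset_sum,
    Finset.prod_const, Finset.card_univ, Fintype.card_fin, nrm, Finset.mul_sum, sq, mul_pow]

lemma sum_addChar_mul_mul_eq_card_mul_sum_filter {ι : Type*} {ψ : AddChar F R}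
    (hψ : ψ.IsPrimitive) (s : Finset ι) (f : ι → F) (g : ι → R) :
    ∑ t, ∑ x ∈ s, ψ (t * f x) * g x = Fintype.card F * ∑ x ∈ s with f x = 0, g x := by
  rw [Finset.sum_comm, Finset.sum_filter, Finset.mul_sum]
  refine Finset.sum_congr rfl fun x _ => ?_
  rw [← Finset.sum_mul, sum_mulShift _ hψ]
  split_ifs <;> simp

lemma quadraticCharTo_mul_gaussSum_pow_of_even [CharZero R] (hF : ringChar F ≠ 2)
    {ψ : AddChar F R} (hψ : ψ.IsPrimitive) {s : F} (hs : s ≠ 0) {n : ℕ} (hn : Even n) :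
    (quadraticCharTo F R s * gaussSum (quadraticCharTo F R) ψ) ^ n =
      (quadraticCharTo F R (-1) * Fintype.card F) ^ (n / 2) := by
  obtain ⟨j, rfl⟩ := hn
  rw [← two_mul, Nat.mul_div_cancel_left j two_pos, pow_mul, mul_pow, quadraticCharTo_sq hs,
    one_mul, gaussSum_sq (quadraticCharTo_ne_one hF) quadraticCharTo_isQuadratic hψ]

lemma card_mul_sum_addChar_dotP_sph_zero [CharZero R] (hF : ringChar F ≠ 2)
    {ψ : AddChar F R} (hψ : ψ.IsPrimitive) {n : ℕ} (hn : Even n) (m : Fin n → F) :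
    Fintype.card F * ∑ y ∈ sph F n 0, ψ (dotP m y) =
      (if m = 0 then (Fintype.card F : R) ^ n else 0) +
        (quadraticCharTo F R (-1) * Fintype.card F) ^ (n / 2) *
          ∑ r ∈ univ \ {0}, ψ (r * nrm m) := by
  have hc : -(4 : F)⁻¹ ≠ 0 := by
    simpa [show (4 : F) = 2 ^ 2 by norm_num] using Ring.two_ne_zero hF
  calc (Fintype.card F : R) * ∑ y ∈ sph F n 0, ψ (dotP m y)
      = ∑ t, ∑ y : Fin n → F, ψ (t * nrm y + dotP m y) := by
        simp_rw [map_add_eq_mul, sum_addChar_mul_mul_eq_card_mul_sum_filter hψ]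
        rfl
    _ = ∑ y : Fin n → F, ψ (dotP m y) +
          ∑ t ∈ univ \ {0}, ψ (-(4 * t)⁻¹ * nrm m) *
            (quadraticCharTo F R (-1) * Fintype.card F) ^ (n / 2) := by
        rw [Finset.sum_eq_add_sum_sdiff_singleton_of_mem (mem_univ 0)]
        refine congrArg₂ _ (by simp_rw [zero_mul, zero_add]) (Finset.sum_congr rfl fun t ht => ?_)
        have ht : t ≠ 0 := by simpa using ht
        rw [sum_addChar_mul_nrm_add_dotP hF hψ ht,
          quadraticCharTo_mul_gaussSum_pow_of_even hF hψ ht hn]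
    _ = _ := by
        have hreindex :
            ∑ t ∈ univ \ {0}, ψ (-(4 * t)⁻¹ * nrm m) = ∑ r ∈ univ \ {0}, ψ (r * nrm m) := by
          simp_rw [mul_inv, ← neg_mul]
          exact sum_sdiff_zero_comp_mul_inv (fun r => ψ (r * nrm m)) hc
        rw [sum_addChar_dotP hψ, ← Finset.sum_mul, hreindex, mul_comm (∑ r ∈ _, _)]

end

theorem stmt9_general (k : ℕ)
    (F : Type*) [Field F] [Fintype F] [DecidableEq F]
    (hq : Fintype.card F % 4 = 3)
    (χ : AddChar F ℂ) (hχ : χ ≠ 1)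
    (m : Fin (4 * k + 2) → F) :
    ((Fintype.card F : ℂ) ^ (4 * k + 2))⁻¹ *
        ∑ y ∈ sph F (4 * k + 2) (0 : F), χ (dotP m y) =
      (Fintype.card F : ℂ)⁻¹ * (if m = 0 then 1 else 0) -
        ((Fintype.card F : ℂ) ^ (2 * k + 2))⁻¹ *
          ∑ r ∈ (Finset.univ : Finset F) \ {0}, χ (r * nrm m) := by
  have hF : ringChar F ≠ 2 := fun h => by
    have := FiniteField.even_card_of_char_two h
    omega
  have hη : quadraticCharTo F ℂ (-1) = -1 := by
    rw [quadraticCharTo, MulChar.ringHomComp_apply, quadraticChar_neg_one_iff_not_isSquare.mpr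
      (FiniteField.isSquare_neg_one_iff.not_left.mpr hq)]
    simp
  have key := card_mul_sum_addChar_dotP_sph_zero hF (IsPrimitive.of_ne_one hχ)
    ⟨2 * k + 1, by ring⟩ m
  rw [hη, show (4 * k + 2) / 2 = 2 * k + 1 by omega, neg_one_mul,
    Odd.neg_pow ⟨k, rfl⟩] at key
  have hq0 : (Fintype.card F : ℂ) ≠ 0 := Nat.cast_ne_zero.mpr Fintype.card_ne_zero
  rw [(eq_inv_mul_iff_mul_eq₀ hq0).mpr key]
  generalize ∑ r ∈ univ \ {0}, χ (r * nrm m) = T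
  field_simp
  split_ifs <;> ring

/-- explicit Fourier transform of the zero sphere: for `n = 4k + 2`,
`q ≡ 3 (mod 4)`, and every `m ∈ 𝔽_q^n`,
`q^{-n} Σ_{y ∈ S₀} χ(m·y) = q^{-1} δ₀(m) - q^{-(n+2)/2} Σ_{r ≠ 0} χ(r‖m‖)`.
Here `(n+2)/2 = 2k + 2`. -/
theorem stmt9 (k : ℕ) (hk : 0 < k)
    (F : Type*) [Field F] [Fintype F] [DecidableEq F]
    (hq : Fintype.card F % 4 = 3)
    (χ : AddChar F ℂ) (hχ : χ ≠ 1)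
    (m : Fin (4 * k + 2) → F) :
    ((Fintype.card F : ℂ) ^ (4 * k + 2))⁻¹ *
        ∑ y ∈ sph F (4 * k + 2) (0 : F), χ (dotP m y) =
      (Fintype.card F : ℂ)⁻¹ * (if m = 0 then 1 else 0) -
        ((Fintype.card F : ℂ) ^ (2 * k + 2))⁻¹ *
          ∑ r ∈ (Finset.univ : Finset F) \ {0}, χ (r * nrm m) :=
  stmt9_general k F hq χ hχ m
end

section
/- Let q be an odd prime power and d ≥ 2. Let x, y, z ∈ P_d ⊆ 𝔽_q^d, and write x̄ := (x_1, …, x_{d−1}) ∈ 𝔽_q^{d−1} for the projection onto the first d − 1 coordinates (similarly ȳ, z̄). Assume ||x̄|| ≠ 0. Then x·y = x·z if and only if || −x̄/(2||x̄||) − ȳ || = || −x̄/(2||x̄||) − z̄ ||. -/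
open Finset

/-! With `c := -x̄ / (2‖x̄‖)`, expanding the square gives
`‖c - ȳ‖ = ‖c‖ + (x̄·ȳ + ‖x̄‖‖ȳ‖) / ‖x̄‖`, and on the paraboloid `x̄·ȳ + ‖x̄‖‖ȳ‖ = x·y`
since `x_d = ‖x̄‖` and `y_d = ‖ȳ‖`. So `‖c - ȳ‖ = ‖c‖ + x·y / ‖x̄‖`, which is injective in `x·y`. -/

theorem FiniteField.two_ne_zero_of_odd_card {F : Type*} [Field F] [Fintype F]
    (hodd : Odd (Fintype.card F)) : (2 : F) ≠ 0 :=
  Ring.two_ne_zero fun h ↦ by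
    have := FiniteField.even_card_of_char_two h
    rw [Nat.odd_iff] at hodd
    omega

section

variable {R : Type*} [CommRing R] {n : ℕ}

theorem dotP_eq_init_add_last (x y : Fin (n + 1) → R) :
    dotP x y = dotP (Fin.init x) (Fin.init y) + x (Fin.last n) * y (Fin.last n) :=
  Fin.sum_univ_castSucc _

theorem nrm_sub (u v : Fin n → R) : nrm (u - v) = nrm u - 2 * dotP u v + nrm v := by
  simp only [nrm, dotP, mul_sum, ← sum_sub_distrib, ← sum_add_distrib, Pi.sub_apply]
  exact sum_congr rfl fun i _ ↦ by ring

end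

section

variable {F : Type*} [Field F] {n : ℕ}

theorem nrm_neg_div_sub (h2 : (2 : F) ≠ 0) (a b : Fin n → F) (ha : nrm a ≠ 0) :
    (nrm fun i ↦ -a i / (2 * nrm a) - b i) =
      (nrm fun i ↦ -a i / (2 * nrm a)) + (dotP a b + nrm a * nrm b) / nrm a := by
  have hdot : dotP (fun i ↦ -a i / (2 * nrm a)) b = -dotP a b / (2 * nrm a) := by
    simp only [dotP, neg_div, neg_mul, sum_neg_distrib, sum_div, div_mul_eq_mul_div]
  change nrm ((fun i ↦ -a i / (2 * nrm a)) - b) = _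
  rw [nrm_sub, hdot]
  field_simp
  ring

theorem dotP_eq_iff_nrm_sub_eq_of_paraboloid (h2 : (2 : F) ≠ 0) (x y z : Fin (n + 1) → F)
    (hx : x (Fin.last n) = nrm (Fin.init x)) (hy : y (Fin.last n) = nrm (Fin.init y))
    (hz : z (Fin.last n) = nrm (Fin.init z)) (hnx : nrm (Fin.init x) ≠ 0) :
    dotP x y = dotP x z ↔
      (nrm fun i ↦ -Fin.init x i / (2 * nrm (Fin.init x)) - Fin.init y i) =
        nrm fun i ↦ -Fin.init x i / (2 * nrm (Fin.init x)) - Fin.init z i := by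
  rw [nrm_neg_div_sub h2 _ _ hnx, nrm_neg_div_sub h2 _ _ hnx, add_right_inj,
    div_left_inj' hnx, ← hx, ← hy, ← hz, ← dotP_eq_init_add_last, ← dotP_eq_init_add_last]

end

/-- for `x, y, z` on the paraboloid `P_d ⊆ 𝔽_q^d` (`q` odd) with
`‖x̄‖ ≠ 0`, one has `x·y = x·z` iff
`‖-x̄/(2‖x̄‖) - ȳ‖ = ‖-x̄/(2‖x̄‖) - z̄‖`, where `x̄` denotes the projection to the
first `d-1` coordinates. -/
theorem stmt15 (F : Type*) [Field F] [Fintype F]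
    (hodd : Odd (Fintype.card F))
    (d : ℕ) (hd : 2 ≤ d) (x y z : Fin d → F)
    (hx : x ⟨d - 1, by omega⟩ = nrm fun i : Fin (d - 1) => x (Fin.castLE (by omega) i))
    (hy : y ⟨d - 1, by omega⟩ = nrm fun i : Fin (d - 1) => y (Fin.castLE (by omega) i))
    (hz : z ⟨d - 1, by omega⟩ = nrm fun i : Fin (d - 1) => z (Fin.castLE (by omega) i))
    (hnx : (nrm fun i : Fin (d - 1) => x (Fin.castLE (by omega) i)) ≠ 0) :
    (dotP x y = dotP x z ↔
      (nrm fun i : Fin (d - 1) =>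
          -(x (Fin.castLE (by omega) i)) /
              (2 * nrm fun j : Fin (d - 1) => x (Fin.castLE (by omega) j)) -
            y (Fin.castLE (by omega) i)) =
      (nrm fun i : Fin (d - 1) =>
          -(x (Fin.castLE (by omega) i)) /
              (2 * nrm fun j : Fin (d - 1) => x (Fin.castLE (by omega) j)) -
            z (Fin.castLE (by omega) i))) := by
  obtain ⟨n, rfl⟩ : ∃ n, d = n + 1 := ⟨d - 1, by omega⟩
  -- `n + 1 - 1` reduces to `n` and `Fin.castLE _ i` to `i.castSucc`, so the hypotheses fit by defeq.
  exact dotP_eq_iff_nrm_sub_eq_of_paraboloid (FiniteField.two_ne_zero_of_odd_card hodd)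
    x y z hx hy hz hnx
end

section
/- Let q be a prime power and d ≥ 3. Let S ⊆ 𝔽_q^{d−2} be a set that is totally isotropic, i.e. s·s' = 0 for all s, s' ∈ S, and let A ⊆ 𝔽_q \ {0} be closed under multiplication. Define E := {(s_1, …, s_{d−2}, x, x²) : s ∈ S, x ∈ A} ⊆ 𝔽_q^d. Then E ⊆ P_d, |E| = |S| · |A|, and ∏(E) ⊆ {a + a² : a ∈ A}; in particular |∏(E)| ≤ |A|. -/
open Finset

/-! The dot product of `(s, a, a²)` and `(t, b, b²)` is `s·t + ab + (ab)²`. For `s, t` in a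
totally isotropic set this is `ab + (ab)²` with `ab ∈ A` when `A` is multiplicatively closed, and
`s·s = 0` puts `(s, a, a²)` on the paraboloid. -/

section SnocSq

variable {F : Type*} [CommRing F]

def OnParaboloid {m : ℕ} (x : Fin (m + 1) → F) : Prop :=
  x (Fin.last m) = ∑ i : Fin m, x i.castSucc ^ 2

def snocSq {n : ℕ} (s : Fin n → F) (a : F) : Fin (n + 2) → F :=
  Fin.snoc (Fin.snoc s a) (a ^ 2)

variable {n : ℕ}

theorem snocSq_eq_dite (s : Fin n → F) (a : F) :
    (fun i : Fin (n + 2) =>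
      if h : (i : ℕ) < n then s ⟨i, h⟩ else if (i : ℕ) = n then a else a ^ 2) =
      snocSq s a := by
  funext i
  induction i using Fin.lastCases with
  | last => simp [snocSq]
  | cast j =>
    induction j using Fin.lastCases with
    | last => simp [snocSq]
    | cast i => simp [snocSq, i.isLt]

theorem snocSq_injective : Function.Injective fun p : (Fin n → F) × F => snocSq p.1 p.2 := by
  rintro ⟨s, a⟩ ⟨t, b⟩ h
  obtain ⟨hsa, -⟩ := Fin.snoc_inj.mp h
  obtain ⟨hs, ha⟩ := Fin.snoc_inj.mp hsa
  exact Prod.ext hs ha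

theorem onParaboloid_snocSq {s : Fin n → F} (hs : dotP s s = 0) (a : F) :
    OnParaboloid (snocSq s a) := by
  simp only [OnParaboloid, snocSq, Fin.snoc_last, Fin.snoc_castSucc, Fin.sum_univ_castSucc]
  simp only [dotP, ← sq] at hs
  rw [hs, zero_add]

theorem dotP_snocSq (s t : Fin n → F) (a b : F) :
    dotP (snocSq s a) (snocSq t b) = dotP s t + a * b + (a * b) ^ 2 := by
  simp only [dotP, snocSq, Fin.sum_univ_castSucc, Fin.snoc_last, Fin.snoc_castSucc]
  ring

theorem prodSet_image_snocSq_subset [DecidableEq F] {S : Finset (Fin n → F)}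
    (hS : ∀ s ∈ S, ∀ t ∈ S, dotP s t = 0) {A : Finset F}
    (hA : ∀ a ∈ A, ∀ b ∈ A, a * b ∈ A) :
    prodSet ((S ×ˢ A).image fun p => snocSq p.1 p.2) ⊆ A.image fun a => a + a ^ 2 := by
  intro _ h
  obtain ⟨⟨_, _⟩, hxy, rfl⟩ := mem_image.mp h
  obtain ⟨hx, hy⟩ := mem_product.mp hxy
  obtain ⟨⟨s, a⟩, hsa, rfl⟩ := mem_image.mp hx
  obtain ⟨⟨t, b⟩, htb, rfl⟩ := mem_image.mp hy
  obtain ⟨hs, ha⟩ := mem_product.mp hsa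
  obtain ⟨ht, hb⟩ := mem_product.mp htb
  exact mem_image.mpr ⟨a * b, hA a ha b hb, by rw [dotP_snocSq, hS s hs t ht, zero_add]⟩

end SnocSq

/-- construction: if `S ⊆ 𝔽_q^{d-2}` is totally isotropic and
`A ⊆ 𝔽_q \ {0}` is closed under multiplication, then
`E = {(s, x, x²) : s ∈ S, x ∈ A}` satisfies `E ⊆ P_d`, `|E| = |S||A|`,
`∏(E) ⊆ {a + a² : a ∈ A}`, and in particular `|∏(E)| ≤ |A|`. -/
theorem stmt16 (F : Type*) [Field F] [DecidableEq F]
    (d : ℕ) (hd : 3 ≤ d)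
    (S : Finset (Fin (d - 2) → F)) (hS : ∀ s ∈ S, ∀ s' ∈ S, dotP s s' = 0)
    (A : Finset F) (hAmul : ∀ a ∈ A, ∀ b ∈ A, a * b ∈ A)
    (E : Finset (Fin d → F))
    (hE : E = (S ×ˢ A).image fun p (i : Fin d) =>
      if h : (i : ℕ) < d - 2 then p.1 ⟨(i : ℕ), h⟩
      else if (i : ℕ) = d - 2 then p.2 else p.2 ^ 2) :
    (∀ x ∈ E, x ⟨d - 1, by omega⟩ =
        ∑ i : Fin (d - 1), x (Fin.castLE (by omega) i) ^ 2) ∧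
      E.card = S.card * A.card ∧
      (∀ t ∈ prodSet E, ∃ a ∈ A, t = a + a ^ 2) ∧
      (prodSet E).card ≤ A.card := by
  obtain ⟨n, rfl⟩ : ∃ n, d = n + 2 := ⟨d - 2, by omega⟩
  replace hE : E = (S ×ˢ A).image fun p => snocSq p.1 p.2 := by
    simp only [hE, ← snocSq_eq_dite]
    rfl -- `n + 2 - 2` reduces to `n`
  subst hE
  have hprod := prodSet_image_snocSq_subset hS hAmul
  refine ⟨?_, ?_, fun t ht => ?_, (card_le_card hprod).trans card_image_le⟩
  · intro _ h
    obtain ⟨⟨s, a⟩, hsa, rfl⟩ := mem_image.mp h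
    have hs := (mem_product.mp hsa).1
    -- the first conjunct is `OnParaboloid` unfolded, with `d - 1 = n + 1`
    exact onParaboloid_snocSq (hS s hs s hs) a
  · rw [card_image_of_injective _ snocSq_injective, card_product]
  · obtain ⟨a, ha, rfl⟩ := mem_image.mp (hprod ht)
    exact ⟨a, ha, rfl⟩
end

section
/- Let q be an odd prime power, n ≥ 2, r ∈ 𝔽_q \ {0}, and let X ⊆ 𝔽_q^n. Suppose there is a constant C₁ > 0 such that for every f : S_r → ℂ the extension estimate ( Σ_{c ∈ 𝔽_q^n} | |S_r|^{-1} Σ_{x ∈ S_r} χ(c·x) f(x) |^{(2n+4)/n} )^{n/(2n+4)} ≤ C₁ ( |S_r|^{-1} Σ_{x ∈ S_r} |f(x)|² )^{1/2} holds. Then Σ_{y ∈ X} | Σ_{m ∈ S_r} X̂(m) χ(y·m) |² ≤ C₁² |S_r| · |X|^{2/(n+2)} · Σ_{m ∈ S_r} |X̂(m)|². -/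
/-!
With `f = |S_r| X̂`, the extension estimate bounds the `L^{(2n+4)/n}` norm over all of `𝔽_q^n` of
`E(y) = Σ_{m ∈ S_r} X̂(m) χ(y·m)` by `C₁ (|S_r| Σ_{m ∈ S_r} |X̂(m)|²)^{1/2}`. Hölder's inequality on
`X` with exponents `(n+2)/n` and `(n+2)/2` gives
`Σ_{y ∈ X} |E(y)|² ≤ (Σ_{y ∈ X} |E(y)|^{(2n+4)/n})^{n/(n+2)} |X|^{2/(n+2)}`; enlarging the sum to
`𝔽_q^n` and squaring the extension estimate finishes the proof.
-/

open Finset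

theorem Finset.sum_le_rpow_sum_rpow_mul_card_rpow {ι : Type*} (s : Finset ι) {f : ι → ℝ}
    (hf : ∀ i ∈ s, 0 ≤ f i) {p : ℝ} (hp : 1 < p) :
    ∑ i ∈ s, f i ≤ (∑ i ∈ s, f i ^ p) ^ p⁻¹ * (#s : ℝ) ^ (1 - p⁻¹) := by
  have hpq := Real.HolderConjugate.conjExponent hp
  simpa [hpq.one_sub_inv] using
    Real.inner_le_Lp_mul_Lq_of_nonneg s hpq hf (g := fun _ => 1) fun _ _ => zero_le_one

theorem Finset.sum_sq_le_rpow_sum_rpow_mul_card_rpow {ι : Type*} (s : Finset ι) {g : ι → ℝ}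
    (hg : ∀ i ∈ s, 0 ≤ g i) {a : ℝ} (ha : 0 < a) :
    ∑ i ∈ s, g i ^ 2 ≤
      (∑ i ∈ s, g i ^ ((2 * a + 4) / a)) ^ (a / (a + 2)) * (#s : ℝ) ^ (2 / (a + 2)) := by
  have hp : 1 < (a + 2) / a := by rw [lt_div_iff₀ ha]; linarith
  convert s.sum_le_rpow_sum_rpow_mul_card_rpow (fun i _ => sq_nonneg (g i)) hp using 3
  · refine sum_congr rfl fun i hi => ?_
    rw [← Real.rpow_natCast, ← Real.rpow_mul (hg i hi)]
    congr 1
    field_simp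
    ring
  · rw [inv_div]
  · field_simp
    ring

theorem Real.rpow_two_mul_le_sq_mul_of_rpow_le {a b c t : ℝ} (ha : 0 ≤ a) (hb : 0 ≤ b)
    (h : a ^ t ≤ c * b ^ (1 / 2 : ℝ)) : a ^ (2 * t) ≤ c ^ 2 * b :=
  calc a ^ (2 * t) = (a ^ t) ^ 2 := by rw [mul_comm, Real.rpow_mul ha, Real.rpow_two]
    _ ≤ (c * b ^ (1 / 2 : ℝ)) ^ 2 := pow_le_pow_left₀ (Real.rpow_nonneg ha t) h 2
    _ = c ^ 2 * b := by rw [mul_pow, ← Real.sqrt_eq_rpow, Real.sq_sqrt hb]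

theorem Finset.inv_card_mul_sum_mul_card_mul {ι : Type*} {s : Finset ι} (hs : s.Nonempty)
    (a b : ι → ℂ) : (#s : ℂ)⁻¹ * ∑ i ∈ s, a i * (#s * b i) = ∑ i ∈ s, b i * a i := by
  have : (#s : ℂ) ≠ 0 := by exact_mod_cast hs.card_pos.ne'
  rw [mul_sum]
  refine sum_congr rfl fun i _ => ?_
  field_simp

theorem Finset.inv_card_mul_sum_norm_card_mul_sq {ι : Type*} {s : Finset ι} (hs : s.Nonempty)
    (b : ι → ℂ) : (#s : ℝ)⁻¹ * ∑ i ∈ s, ‖(#s : ℂ) * b i‖ ^ 2 = #s * ∑ i ∈ s, ‖b i‖ ^ 2 := by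
  have : (#s : ℝ) ≠ 0 := by exact_mod_cast hs.card_pos.ne'
  simp only [norm_mul, Complex.norm_natCast, mul_pow, ← mul_sum]
  field_simp

theorem stmt17_general (F : Type*) [Field F] [Fintype F] [DecidableEq F]
    (n : ℕ) (hn : 2 ≤ n)
    (χ : AddChar F ℂ)
    (r : F)
    (X : Finset (Fin n → F))
    (C₁ : ℝ)
    (hext : ∀ f : (Fin n → F) → ℂ,
      (∑ w : Fin n → F,
          ‖(((sph F n r).card : ℂ))⁻¹ * ∑ x ∈ sph F n r, χ (dotP w x) * f x‖ ^
            ((2 * (n : ℝ) + 4) / (n : ℝ))) ^ ((n : ℝ) / (2 * (n : ℝ) + 4)) ≤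
        C₁ * ((((sph F n r).card : ℝ))⁻¹ * ∑ x ∈ sph F n r, ‖f x‖ ^ 2) ^ ((1 : ℝ) / 2)) :
    ∑ y ∈ X, ‖∑ m ∈ sph F n r, fourierCoef χ X m * χ (dotP y m)‖ ^ 2 ≤
      C₁ ^ 2 * ((sph F n r).card : ℝ) * (X.card : ℝ) ^ ((2 : ℝ) / ((n : ℝ) + 2)) *
        ∑ m ∈ sph F n r, ‖fourierCoef χ X m‖ ^ 2 := by
  set S := sph F n r
  obtain hS | hS := S.eq_empty_or_nonempty
  · simp [hS]
  set g : (Fin n → F) → ℝ := fun w => ‖∑ m ∈ S, fourierCoef χ X m * χ (dotP w m)‖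
  have hn0 : (0 : ℝ) < n := Nat.cast_pos.2 (by omega)
  have hextension : (∑ w, g w ^ ((2 * (n : ℝ) + 4) / n)) ^ ((n : ℝ) / (n + 2)) ≤
      C₁ ^ 2 * (#S * ∑ m ∈ S, ‖fourierCoef χ X m‖ ^ 2) := by
    have h := hext fun m => (#S : ℂ) * fourierCoef χ X m
    rw [inv_card_mul_sum_norm_card_mul_sq hS] at h
    simp only [inv_card_mul_sum_mul_card_mul hS] at h
    convert Real.rpow_two_mul_le_sq_mul_of_rpow_le (by positivity) (by positivity) h using 2
    field_simp
    ring
  calc ∑ y ∈ X, g y ^ 2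
      ≤ (∑ y ∈ X, g y ^ ((2 * (n : ℝ) + 4) / n)) ^ ((n : ℝ) / (n + 2)) *
          (#X : ℝ) ^ ((2 : ℝ) / (n + 2)) :=
        X.sum_sq_le_rpow_sum_rpow_mul_card_rpow (fun _ _ => norm_nonneg _) hn0
    _ ≤ (∑ w, g w ^ ((2 * (n : ℝ) + 4) / n)) ^ ((n : ℝ) / (n + 2)) *
          (#X : ℝ) ^ ((2 : ℝ) / (n + 2)) := by
        gcongr
        exact subset_univ X
    _ ≤ C₁ ^ 2 * (#S * ∑ m ∈ S, ‖fourierCoef χ X m‖ ^ 2) * (#X : ℝ) ^ ((2 : ℝ) / (n + 2)) := by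
        gcongr
    _ = _ := by ring

/-- if the `L² → L^{(2n+4)/n}` extension estimate holds for the sphere
`S_r ⊆ 𝔽_q^n` (`r ≠ 0`) with constant `C₁`, then for any `X ⊆ 𝔽_q^n`,
`Σ_{y ∈ X} |Σ_{m ∈ S_r} X̂(m) χ(y·m)|² ≤ C₁² |S_r| |X|^{2/(n+2)} Σ_{m ∈ S_r} |X̂(m)|²`. -/
theorem stmt17 (F : Type*) [Field F] [Fintype F] [DecidableEq F]
    (hodd : Odd (Fintype.card F))
    (n : ℕ) (hn : 2 ≤ n)
    (χ : AddChar F ℂ) (hχ : χ ≠ 1)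
    (r : F) (hr : r ≠ 0)
    (X : Finset (Fin n → F))
    (C₁ : ℝ) (hC₁ : 0 < C₁)
    (hext : ∀ f : (Fin n → F) → ℂ,
      (∑ w : Fin n → F,
          ‖(((sph F n r).card : ℂ))⁻¹ * ∑ x ∈ sph F n r, χ (dotP w x) * f x‖ ^
            ((2 * (n : ℝ) + 4) / (n : ℝ))) ^ ((n : ℝ) / (2 * (n : ℝ) + 4)) ≤
        C₁ * ((((sph F n r).card : ℝ))⁻¹ * ∑ x ∈ sph F n r, ‖f x‖ ^ 2) ^ ((1 : ℝ) / 2)) :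
    ∑ y ∈ X, ‖∑ m ∈ sph F n r, fourierCoef χ X m * χ (dotP y m)‖ ^ 2 ≤
      C₁ ^ 2 * ((sph F n r).card : ℝ) * (X.card : ℝ) ^ ((2 : ℝ) / ((n : ℝ) + 2)) *
        ∑ m ∈ sph F n r, ‖fourierCoef χ X m‖ ^ 2 :=
  stmt17_general F n hn χ r X C₁ hext
end
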